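/- Let k be a commutative unital ring, C_∞ the free associative unital k-algebra on generators d_1, d_2, …, with S_1 = 0, S_m = ∑_{u+v=m, u,v≥1} (-1)^{u+1} d_u d_v for m ≥ 2, and δ_0 the k-linear endomorphism determined on words by δ_0(d_{i_1}⋯d_{i_k}) = ∑_{j=1}^{k} (-1)^{(i_1+1)+⋯+(i_{j-1}+1)} d_{i_1}⋯d_{i_{j-1}} S_{i_j} d_{i_{j+1}}⋯d_{i_k}. Let h be the k-linear endomorphism of C_∞ determined on words by h(1) = 0, h(d_{i_1}⋯d_{i_k}) = 0 if k = 1 or i_1 > 1, and h(d_1 d_{i_2}⋯d_{i_k}) = d_{i_2+1} d_{i_3}⋯d_{i_k} for k ≥ 2. Then (δ_0 h + h δ_0)(w) = w for every word w other than 1 and d_1, and (δ_0 h + h δ_0)(1) = 0 = (δ_0 h + h δ_0)(d_1). -/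

import Mathlib

set_option linter.unusedVariables false
set_option synthInstance.maxHeartbeats 1000000
set_option maxHeartbeats 1000000

universe u

noncomputable section

/-- The free associative unital `k`-algebra on generators `d_1, d_2, …`
(indexed by `ℕ+`), realized as the monoid algebra on the free monoid on `ℕ+`,
with `k`-basis the words `d_{i_1} ⋯ d_{i_k}`. -/
abbrev Cinf (k : Type u) [CommRing k] := MonoidAlgebra k (FreeMonoid ℕ+)

variable (k : Type u) [CommRing k]

/-- The basis word `d_{i_1} ⋯ d_{i_k}` of `C_∞`. -/
def word (w : List ℕ+) : Cinf k :=
  MonoidAlgebra.of k (FreeMonoid ℕ+) (FreeMonoid.ofList w)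

/-- `S_1 = 0` and `S_m = ∑_{u+v=m, u,v ≥ 1} (-1)^{u+1} d_u d_v` for `m ≥ 2`. -/
def Sel (m : ℕ+) : Cinf k :=
  ∑ u : Fin ((m : ℕ) - 1), ((-1 : ℤ) ^ ((u : ℕ) + 1 + 1)) •
    word k [⟨(u : ℕ) + 1, Nat.succ_pos _⟩,
            ⟨(m : ℕ) - ((u : ℕ) + 1), by have := u.isLt; omega⟩]

/-- The value of `δ_0` on the word `d_{i_1} ⋯ d_{i_k}`:
`∑_{j=1}^{k} (-1)^{(i_1+1)+⋯+(i_{j-1}+1)} d_{i_1} ⋯ d_{i_{j-1}} S_{i_j} d_{i_{j+1}} ⋯ d_{i_k}`. -/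
def deltaWord (w : List ℕ+) : Cinf k :=
  ∑ j : Fin w.length,
    ((-1 : ℤ) ^ (∑ t : Fin (j : ℕ), ((w.get ⟨(t : ℕ), Nat.lt_trans t.isLt j.isLt⟩ : ℕ) + 1))) •
      (word k (w.take (j : ℕ)) * Sel k (w.get j) * word k (w.drop ((j : ℕ) + 1)))

/-- The `k`-linear endomorphism `δ_0` of `C_∞`, determined on words by `deltaWord`. -/
def delta0 : Cinf k →ₗ[k] Cinf k :=
  (Finsupp.lift (Cinf k) k (FreeMonoid ℕ+)) (fun w => deltaWord k w.toList) ∘ₗ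
    (MonoidAlgebra.coeffLinearEquiv k).toLinearMap

/-- The value of `h` on words: `h(1) = 0`, `h(d_{i_1}⋯d_{i_k}) = 0` if `k = 1` or
`i_1 > 1`, and `h(d_1 d_{i_2} ⋯ d_{i_k}) = d_{i_2+1} d_{i_3} ⋯ d_{i_k}`. -/
def hWord : List ℕ+ → Cinf k
  | [] => 0
  | [_] => 0
  | (i :: j :: w) => if i = 1 then word k ((j + 1) :: w) else 0

/-- The `k`-linear endomorphism `h` of `C_∞`, determined on words by `hWord`. -/
def hmap : Cinf k →ₗ[k] Cinf k :=
  (Finsupp.lift (Cinf k) k (FreeMonoid ℕ+)) (fun w => hWord k w.toList) ∘ₗ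
    (MonoidAlgebra.coeffLinearEquiv k).toLinearMap

/-- The bidegree of a word: `d_{i_1}⋯d_{i_k}` has bidegree `(-∑ i_j, k - ∑ i_j)`. -/
def wordDeg (w : List ℕ+) : ℤ × ℤ :=
  (-(w.map (fun i => ((i : ℕ) : ℤ))).sum,
    (w.length : ℤ) - (w.map (fun i => ((i : ℕ) : ℤ))).sum)

/-- `x ∈ C_∞` is homogeneous of bidegree `(p,q)`: every word in its support has
bidegree `(p,q)`. -/
def IsHomog (p q : ℤ) (x : Cinf k) : Prop :=
  ∀ w ∈ (x.coeff : FreeMonoid ℕ+ →₀ k).support, wordDeg w.toList = (p, q)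

end

/-!
Both maps interact simply with a leading letter: `δ₀(d_i w) = S_i w ± d_i δ₀ w`,
`h(d_m x) = 0` for `m ≠ 1` and `h(d_1 d_j x) = d_{j+1} x`. On `d_1 d_j w` the terms
`± d_{j+1} δ₀ w` of `δ₀ h` and `h δ₀` cancel, leaving `S_{j+1} w + h(d_1 S_j w) = d_1 d_j w`: the
summand `d_u d_{j+1-u}` of `S_{j+1}` with `u ≥ 2` cancels against the image under `h(d_1 ·)` of
the summand `d_{u-1} d_{j+1-u}` of `S_j`. On `d_i w` with `i ≥ 2` only `h(S_i w)` survives, and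
applying `h` to the previous identity (with `h² = 0`) gives `h(S_i w) = d_i w`.
-/

section
open Finset
variable {k : Type u} [CommRing k]

lemma word_nil : word k [] = 1 := map_one (MonoidAlgebra.of k (FreeMonoid ℕ+))

lemma word_append (a b : List ℕ+) : word k (a ++ b) = word k a * word k b :=
  map_mul (MonoidAlgebra.of k (FreeMonoid ℕ+)) (FreeMonoid.ofList a) (FreeMonoid.ofList b)

lemma word_cons (i : ℕ+) (w : List ℕ+) : word k (i :: w) = word k [i] * word k w :=
  word_append [i] w

lemma delta0_word (w : List ℕ+) : delta0 k (word k w) = deltaWord k w := by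
  simp [delta0, word]

lemma delta0_word_nil : delta0 k (word k []) = 0 := by
  simp [delta0_word, deltaWord]

lemma hmap_word (w : List ℕ+) : hmap k (word k w) = hWord k w := by
  simp [hmap, word]

lemma hWord_cons_of_ne_one {i : ℕ+} (hi : i ≠ 1) (w : List ℕ+) : hWord k (i :: w) = 0 := by
  cases w <;> simp [hWord, hi]

lemma linearMap_ext_word {f g : Cinf k →ₗ[k] Cinf k} (h : ∀ w, f (word k w) = g (word k w)) :
    f = g := by
  refine MonoidAlgebra.lhom_ext' fun a => LinearMap.ext_ring ?_
  simpa [word, MonoidAlgebra.of_apply] using h a.toList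

lemma hmap_word_mul_of_ne_one {m : ℕ+} (hm : m ≠ 1) (x : Cinf k) :
    hmap k (word k [m] * x) = 0 := by
  have : hmap k ∘ₗ LinearMap.mulLeft k (word k [m]) = 0 := linearMap_ext_word fun w => by
    simp [← word_cons, hmap_word, hWord_cons_of_ne_one hm]
  exact LinearMap.congr_fun this x

lemma hmap_word_one_mul_word_cons_mul (i : ℕ+) (w : List ℕ+) (x : Cinf k) :
    hmap k (word k [1] * (word k (i :: w) * x)) = word k ((i + 1) :: w) * x := by
  have : hmap k ∘ₗ LinearMap.mulLeft k (word k [1]) ∘ₗ LinearMap.mulLeft k (word k (i :: w)) =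
      LinearMap.mulLeft k (word k ((i + 1) :: w)) := linearMap_ext_word fun v => by
    simp [← word_append, hmap_word, hWord]
  exact LinearMap.congr_fun this x

lemma hmap_hmap (x : Cinf k) : hmap k (hmap k x) = 0 := by
  have : hmap k ∘ₗ hmap k = 0 := linearMap_ext_word fun w => by
    match w with
    | [] | [_] => simp [hmap_word, hWord]
    | i :: j :: w =>
      have hj : j + 1 ≠ 1 := by simp [← PNat.coe_inj]
      rw [LinearMap.comp_apply, hmap_word, hWord, LinearMap.zero_apply]
      split_ifs
      · rw [hmap_word, hWord_cons_of_ne_one hj]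
      · exact map_zero _
  exact LinearMap.congr_fun this x

lemma Sel_one : Sel k 1 = 0 := Fin.sum_univ_zero _

lemma Sel_add_two (n : ℕ) :
    Sel k (n + 1).succPNat =
      ∑ p ∈ antidiagonal n, (-1 : ℤ) ^ p.1 • word k [p.1.succPNat, p.2.succPNat] := by
  rw [Finset.Nat.sum_antidiagonal_eq_sum_range_succ_mk, ← Fin.sum_univ_eq_sum_range, Sel]
  refine sum_congr rfl fun u _ => ?_
  have hu : (u : ℕ) < n + 1 := u.isLt
  rw [show (-1 : ℤ) ^ ((u : ℕ) + 1 + 1) = (-1) ^ (u : ℕ) by ring]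
  congr 3
  refine congrArg (· :: []) (PNat.eq ?_)
  simp only [Nat.succPNat_coe, PNat.mk_coe]
  omega

lemma delta0_word_cons (i : ℕ+) (w : List ℕ+) :
    delta0 k (word k (i :: w)) =
      Sel k i * word k w + (-1 : ℤ) ^ ((i : ℕ) + 1) • (word k [i] * delta0 k (word k w)) := by
  rw [delta0_word, delta0_word, deltaWord, deltaWord]
  simp only [List.length_cons]
  rw [Fin.sum_univ_succ]
  congr 1
  · rw [sum_eq_zero fun t _ => absurd t.isLt (by simp), pow_zero, one_smul]
    simp [word_nil]
  · rw [mul_sum, smul_sum]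
    refine sum_congr rfl fun j _ => ?_
    simp only [Fin.val_succ, List.take_succ_cons, List.drop_succ_cons, Fin.sum_univ_succ]
    rw [mul_smul_comm, smul_smul, ← pow_add, word_cons i (List.take _ _)]
    simp [mul_assoc]

lemma Sel_succ_mul_add_hmap (n : ℕ) (x : Cinf k) :
    Sel k (n + 1).succPNat * x + hmap k (word k [1] * (Sel k n.succPNat * x)) =
      word k [1, n.succPNat] * x := by
  cases n with
  | zero => simp [Sel_add_two, show Nat.succPNat 0 = 1 from rfl, Sel_one]
  | succ n =>
    rw [Sel_add_two (n + 1), Sel_add_two n, Nat.sum_antidiagonal_succ, add_mul, sum_mul, sum_mul,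
      mul_sum, map_sum, add_assoc, ← sum_add_distrib, sum_eq_zero, add_zero]
    · rw [pow_zero, one_smul]
      rfl
    · intro p _
      rw [smul_mul_assoc, smul_mul_assoc, mul_smul_comm, map_zsmul,
        hmap_word_one_mul_word_cons_mul, pow_succ, mul_neg_one, neg_smul]
      exact neg_add_cancel _

lemma hmap_Sel_add_two_mul (n : ℕ) (x : Cinf k) :
    hmap k (Sel k (n + 1).succPNat * x) = word k [(n + 1).succPNat] * x := by
  have key := congrArg (hmap k) (Sel_succ_mul_add_hmap n x)
  rwa [map_add, hmap_hmap, add_zero, word_cons, mul_assoc, hmap_word_one_mul_word_cons_mul] at key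

lemma homotopy_word_cons_of_ne_one {i : ℕ+} (hi : i ≠ 1) (w : List ℕ+) :
    delta0 k (hmap k (word k (i :: w))) + hmap k (delta0 k (word k (i :: w))) =
      word k (i :: w) := by
  obtain ⟨n, rfl⟩ : ∃ n : ℕ, i = (n + 1).succPNat := by
    refine ⟨(i : ℕ) - 2, PNat.eq ?_⟩
    have : (i : ℕ) ≠ 1 := fun h => hi (PNat.eq h)
    rw [Nat.succPNat_coe]
    have := i.pos
    omega
  rw [hmap_word, hWord_cons_of_ne_one hi, map_zero, zero_add, delta0_word_cons, map_add,
    map_zsmul, hmap_Sel_add_two_mul, hmap_word_mul_of_ne_one hi, smul_zero, add_zero, ← word_cons]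

lemma homotopy_one_cons_cons (j : ℕ+) (w : List ℕ+) :
    delta0 k (hmap k (word k (1 :: j :: w))) + hmap k (delta0 k (word k (1 :: j :: w))) =
      word k (1 :: j :: w) := by
  obtain ⟨n, rfl⟩ : ∃ n : ℕ, j = n.succPNat := ⟨j.natPred, j.succPNat_natPred.symm⟩
  have hj : n.succPNat + 1 = (n + 1).succPNat := rfl
  have delta0_hmap : delta0 k (hmap k (word k (1 :: n.succPNat :: w))) =
      Sel k (n + 1).succPNat * word k w +
        (-1 : ℤ) ^ (n + 3) • (word k [(n + 1).succPNat] * delta0 k (word k w)) := by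
    rw [hmap_word, hWord, if_pos rfl, hj, delta0_word_cons, Nat.succPNat_coe]
  have hmap_delta0 : hmap k (delta0 k (word k (1 :: n.succPNat :: w))) =
      hmap k (word k [1] * (Sel k n.succPNat * word k w)) +
        (-1 : ℤ) ^ (n + 2) • (word k [(n + 1).succPNat] * delta0 k (word k w)) := by
    rw [delta0_word_cons, Sel_one, zero_mul, zero_add, PNat.one_coe, one_add_one_eq_two,
      neg_one_sq, one_smul, delta0_word_cons, mul_add, mul_smul_comm, map_add, map_zsmul,
      hmap_word_one_mul_word_cons_mul, hj, Nat.succPNat_coe]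
  rw [delta0_hmap, hmap_delta0, show 1 :: n.succPNat :: w = [1, n.succPNat] ++ w from rfl,
    word_append, ← Sel_succ_mul_add_hmap]
  module

end

/-- `(δ_0 h + h δ_0)(w) = w` for every word `w` other than `1` and `d_1`,
and `(δ_0 h + h δ_0)(1) = 0 = (δ_0 h + h δ_0)(d_1)`. -/
theorem delta0_h_homotopy (k : Type u) [CommRing k] :
    (∀ w : List ℕ+, w ≠ [] → w ≠ [1] →
      delta0 k (hmap k (word k w)) + hmap k (delta0 k (word k w)) = word k w) ∧
    delta0 k (hmap k (word k [])) + hmap k (delta0 k (word k [])) = 0 ∧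
    delta0 k (hmap k (word k [1])) + hmap k (delta0 k (word k [1])) = 0 := by
  refine ⟨fun w hw hw1 => ?_, by simp [hmap_word, hWord, delta0_word_nil], ?_⟩
  · obtain ⟨i, w, rfl⟩ := List.exists_cons_of_ne_nil hw
    by_cases hi : i = 1
    · subst hi
      cases w with
      | nil => exact absurd rfl hw1
      | cons j w => exact homotopy_one_cons_cons j w
    · exact homotopy_word_cons_of_ne_one hi w
  · simp [hmap_word, hWord, delta0_word_cons, Sel_one, delta0_word_nil]
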